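/- arXiv:1504.04428 — 2 statements merged into one kernel-verified Lean document; each statement's English description precedes it below -/
import Mathlib

section
/- Markov-modulated arrivals, uniform case: the extended Bellman operator preserves monotonicity in the queue state for every arrival state. Let 𝒜 be a finite set of arrival vectors a : Fin M → ℕ and κ : 𝒜 → 𝒜 → ℝ a Markov transition kernel with κ(A,A') ≥ 0 and Σ_{A' ∈ 𝒜} κ(A,A') = 1 for all A. For V : 𝒬 × 𝒜 → ℝ define (T̃ V)(Q,A) = min_{u ∈ Fin M} [ g(Q,u) + Σ_{A' ∈ 𝒜} κ(A,A') · V(Q'(Q,u,A), A') ]. If V(·,A') is monotone on 𝒬 (componentwise) for every A' ∈ 𝒜, then (T̃ V)(·,A) is monotone on 𝒬 for every A ∈ 𝒜. (This is the monotonicity step behind Theorem 5 of the paper.) -/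
open Finset

/-- State space of the uniform-channel multicast MDP: request queue vectors capped by `N`. -/
def QSpace (M : ℕ) (N : Fin M → ℕ) : Type :=
  {Q : Fin M → ℕ // ∀ m, Q m ≤ N m}

/-- Next queue state when content `u` is multicast in state `Q` with current arrival `A`. -/
def nextQ {M : ℕ} {N : Fin M → ℕ} (Q : QSpace M N) (u : Fin M) (A : Fin M → ℕ) :
    QSpace M N :=
  ⟨fun m => min ((if m = u then 0 else Q.1 m) + A m) (N m), fun _ => min_le_right _ _⟩

/-- Per-stage cost in the uniform case. -/
noncomputable def gCost {M : ℕ} {N : Fin M → ℕ} (wp wf : ℝ) (p f : Fin M → ℝ)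
    (Q : QSpace M N) (u : Fin M) : ℝ :=
  (∑ m, (Q.1 m : ℝ)) + wp * p u + wf * f u

/-- State-action cost function with Markov-modulated arrivals:
`J̃_V(Q,A,u) = g(Q,u) + Σ_{A' ∈ 𝒜} κ(A,A') · V(Q'(Q,u,A), A')`. -/
noncomputable def JTilde {M : ℕ} {N : Fin M → ℕ} (𝒜 : Finset (Fin M → ℕ))
    (κ : (Fin M → ℕ) → (Fin M → ℕ) → ℝ) (wp wf : ℝ) (p f : Fin M → ℝ)
    (V : QSpace M N → (Fin M → ℕ) → ℝ) (Q : QSpace M N) (A : Fin M → ℕ)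
    (u : Fin M) : ℝ :=
  gCost wp wf p f Q u + ∑ A' ∈ 𝒜, κ A A' * V (nextQ Q u A) A'

/-- Extended Bellman operator for Markov-modulated arrivals:
`(T̃ V)(Q,A) = min_u J̃_V(Q,A,u)`. -/
noncomputable def TTilde {M : ℕ} (hM : 1 ≤ M) {N : Fin M → ℕ} (𝒜 : Finset (Fin M → ℕ))
    (κ : (Fin M → ℕ) → (Fin M → ℕ) → ℝ) (wp wf : ℝ) (p f : Fin M → ℝ)
    (V : QSpace M N → (Fin M → ℕ) → ℝ) (Q : QSpace M N) (A : Fin M → ℕ) : ℝ :=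
  haveI : Nonempty (Fin M) := Fin.pos_iff_nonempty.mp hM
  Finset.univ.inf' Finset.univ_nonempty (fun u => JTilde 𝒜 κ wp wf p f V Q A u)

/-- With Markov-modulated arrivals, the extended Bellman operator preserves
monotonicity in the queue state for every arrival state. -/
theorem markov_bellman_preserves_monotone
    {M : ℕ} (hM : 1 ≤ M) (N : Fin M → ℕ)
    (𝒜 : Finset (Fin M → ℕ)) (κ : (Fin M → ℕ) → (Fin M → ℕ) → ℝ)
    (hκ0 : ∀ A ∈ 𝒜, ∀ A' ∈ 𝒜, 0 ≤ κ A A') (hκ1 : ∀ A ∈ 𝒜, ∑ A' ∈ 𝒜, κ A A' = 1)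
    (wp wf : ℝ) (p f : Fin M → ℝ)
    (V : QSpace M N → (Fin M → ℕ) → ℝ)
    (hV : ∀ A' ∈ 𝒜, ∀ Q₁ Q₂ : QSpace M N, Q₁.1 ≤ Q₂.1 → V Q₁ A' ≤ V Q₂ A') :
    ∀ A ∈ 𝒜, ∀ Q₁ Q₂ : QSpace M N, Q₁.1 ≤ Q₂.1 →
      TTilde hM 𝒜 κ wp wf p f V Q₁ A ≤ TTilde hM 𝒜 κ wp wf p f V Q₂ A := by
  intro A hA Q₁ Q₂ hQ
  haveI : Nonempty (Fin M) := Fin.pos_iff_nonempty.mp hM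
  apply Finset.le_inf'
  intro u _
  refine le_trans (Finset.inf'_le _ (Finset.mem_univ u)) ?_
  unfold JTilde gCost
  gcongr with m hm A' hA'
  · exact hQ m
  · exact hκ0 A hA A' hA'
  · refine hV A' hA' _ _ fun m => ?_
    simp only [nextQ]
    exact min_le_min (Nat.add_le_add_right (by split <;> [rfl; exact hQ m]) _) le_rfl
end

section
/- Switch structure of the optimal policy for Markov-modulated arrivals in the uniform case (Theorem 5, part 1, of the paper): let 𝒜 be a finite set of arrival vectors with Markov kernel κ (κ(A,A') ≥ 0, Σ_{A'} κ(A,A') = 1), and let V : 𝒬 × 𝒜 → ℝ be such that V(·,A') is monotone on 𝒬 for every A' ∈ 𝒜. Define the state-action cost J̃_V(Q,A,u) = g(Q,u) + Σ_{A' ∈ 𝒜} κ(A,A') · V(Q'(Q,u,A), A'). Then for all (Q,A) and u ∈ Fin M with Q u < N u: if J̃_V(Q,A,u) ≤ J̃_V(Q,A,v) for all v ∈ Fin M, then J̃_V(Q + e_u, A, u) ≤ J̃_V(Q + e_u, A, v) for all v ∈ Fin M; i.e., the optimal action at (Q,A) remains optimal at (Q + e_u, A). -/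
open Finset

/-- The state `Q + e_u`: component `u` is increased by 1 (requires `Q u < N u`). -/
def addE {M : ℕ} {N : Fin M → ℕ} (Q : QSpace M N) (u : Fin M) (h : Q.1 u < N u) :
    QSpace M N :=
  ⟨Function.update Q.1 u (Q.1 u + 1), by
    intro m
    rcases eq_or_ne m u with rfl | hm
    · simp only [Function.update_self]; exact h
    · simp only [Function.update_of_ne hm]; exact Q.2 m⟩

/-!
Raising the queue of `u` by one raises the stage cost of every action by exactly one. Under
action `u` that queue is flushed, so the successor state, and hence the continuation cost, is
unchanged; under any other action the successor state can only grow, so by monotonicity of `V`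
and nonnegativity of `κ` the continuation cost can only grow. Thus `J̃(Q + e_u, A, u) - J̃(Q, A, u)`
is at most the corresponding increment of every other action.
-/

variable {M : ℕ} {N : Fin M → ℕ}

theorem nextQ_mono {Q₁ Q₂ : QSpace M N} (hQ : Q₁.1 ≤ Q₂.1) (u : Fin M) (A : Fin M → ℕ) :
    (nextQ Q₁ u A).1 ≤ (nextQ Q₂ u A).1 := by
  intro m
  simp only [nextQ]
  gcongr
  split_ifs
  · exact le_rfl
  · exact hQ m

theorem le_addE (Q : QSpace M N) (u : Fin M) (h : Q.1 u < N u) : Q.1 ≤ (addE Q u h).1 := by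
  intro m
  rcases eq_or_ne m u with rfl | hm
  · simp [addE]
  · simp [addE, Function.update_of_ne hm]

theorem nextQ_addE_self (Q : QSpace M N) (u : Fin M) (h : Q.1 u < N u) (A : Fin M → ℕ) :
    nextQ (addE Q u h) u A = nextQ Q u A := by
  apply Subtype.ext
  funext m
  rcases eq_or_ne m u with rfl | hm
  · simp [nextQ]
  · simp [nextQ, hm, addE]

theorem sum_addE (Q : QSpace M N) (u : Fin M) (h : Q.1 u < N u) :
    ∑ m, ((addE Q u h).1 m : ℝ) = ∑ m, (Q.1 m : ℝ) + 1 := by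
  have hcomp : ∀ m, ((addE Q u h).1 m : ℝ) = Q.1 m + if m = u then 1 else 0 := by
    intro m
    rcases eq_or_ne m u with rfl | hm
    · simp [addE]
    · simp [addE, hm]
  simp [hcomp, sum_add_distrib]

theorem gCost_addE (wp wf : ℝ) (p f : Fin M → ℝ) (Q : QSpace M N) (u : Fin M)
    (h : Q.1 u < N u) (v : Fin M) :
    gCost wp wf p f (addE Q u h) v = gCost wp wf p f Q v + 1 := by
  simp only [gCost, sum_addE]
  ring

theorem JTilde_addE_self (𝒜 : Finset (Fin M → ℕ)) (κ : (Fin M → ℕ) → (Fin M → ℕ) → ℝ)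
    (wp wf : ℝ) (p f : Fin M → ℝ) (V : QSpace M N → (Fin M → ℕ) → ℝ) (Q : QSpace M N)
    (A : Fin M → ℕ) (u : Fin M) (h : Q.1 u < N u) :
    JTilde 𝒜 κ wp wf p f V (addE Q u h) A u = JTilde 𝒜 κ wp wf p f V Q A u + 1 := by
  simp only [JTilde, gCost_addE, nextQ_addE_self]
  ring

theorem sum_kernel_mul_V_nextQ_mono {𝒜 : Finset (Fin M → ℕ)}
    {κ : (Fin M → ℕ) → (Fin M → ℕ) → ℝ} {A : Fin M → ℕ} (hκ : ∀ A' ∈ 𝒜, 0 ≤ κ A A')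
    {V : QSpace M N → (Fin M → ℕ) → ℝ}
    (hV : ∀ A' ∈ 𝒜, ∀ Q₁ Q₂ : QSpace M N, Q₁.1 ≤ Q₂.1 → V Q₁ A' ≤ V Q₂ A')
    {Q₁ Q₂ : QSpace M N} (hQ : Q₁.1 ≤ Q₂.1) (v : Fin M) :
    ∑ A' ∈ 𝒜, κ A A' * V (nextQ Q₁ v A) A' ≤ ∑ A' ∈ 𝒜, κ A A' * V (nextQ Q₂ v A) A' :=
  sum_le_sum fun A' hA' =>
    mul_le_mul_of_nonneg_left (hV A' hA' _ _ (nextQ_mono hQ v A)) (hκ A' hA')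

theorem JTilde_add_one_le_JTilde_addE {𝒜 : Finset (Fin M → ℕ)}
    {κ : (Fin M → ℕ) → (Fin M → ℕ) → ℝ} {A : Fin M → ℕ} (hκ : ∀ A' ∈ 𝒜, 0 ≤ κ A A')
    (wp wf : ℝ) (p f : Fin M → ℝ) {V : QSpace M N → (Fin M → ℕ) → ℝ}
    (hV : ∀ A' ∈ 𝒜, ∀ Q₁ Q₂ : QSpace M N, Q₁.1 ≤ Q₂.1 → V Q₁ A' ≤ V Q₂ A')
    (Q : QSpace M N) (u : Fin M) (h : Q.1 u < N u) (v : Fin M) :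
    JTilde 𝒜 κ wp wf p f V Q A v + 1 ≤ JTilde 𝒜 κ wp wf p f V (addE Q u h) A v := by
  have hcont := sum_kernel_mul_V_nextQ_mono hκ hV (le_addE Q u h) v
  simp only [JTilde, gCost_addE]
  linarith

theorem markov_optimal_policy_switch_structure_general
    {M : ℕ} (N : Fin M → ℕ)
    (𝒜 : Finset (Fin M → ℕ)) (κ : (Fin M → ℕ) → (Fin M → ℕ) → ℝ)
    (hκ0 : ∀ A ∈ 𝒜, ∀ A' ∈ 𝒜, 0 ≤ κ A A')
    (wp wf : ℝ) (p f : Fin M → ℝ)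
    (V : QSpace M N → (Fin M → ℕ) → ℝ)
    (hV : ∀ A' ∈ 𝒜, ∀ Q₁ Q₂ : QSpace M N, Q₁.1 ≤ Q₂.1 → V Q₁ A' ≤ V Q₂ A') :
    ∀ A ∈ 𝒜, ∀ (Q : QSpace M N) (u : Fin M) (h : Q.1 u < N u),
      (∀ v : Fin M, JTilde 𝒜 κ wp wf p f V Q A u ≤ JTilde 𝒜 κ wp wf p f V Q A v) →
      ∀ v : Fin M, JTilde 𝒜 κ wp wf p f V (addE Q u h) A u ≤
        JTilde 𝒜 κ wp wf p f V (addE Q u h) A v := by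
  intro A hA Q u h hopt v
  calc JTilde 𝒜 κ wp wf p f V (addE Q u h) A u
      = JTilde 𝒜 κ wp wf p f V Q A u + 1 := JTilde_addE_self 𝒜 κ wp wf p f V Q A u h
    _ ≤ JTilde 𝒜 κ wp wf p f V Q A v + 1 := by linarith [hopt v]
    _ ≤ JTilde 𝒜 κ wp wf p f V (addE Q u h) A v :=
      JTilde_add_one_le_JTilde_addE (hκ0 A hA) wp wf p f hV Q u h v

/-- Switch structure of the optimal policy for Markov-modulated arrivals in the uniform
case (Theorem 5, part 1): if `V(·,A')` is monotone on the queue state space for every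
arrival state `A'`, and content `u` minimizes `J̃_V(Q,A,·)`, then `u` also minimizes
`J̃_V(Q+e_u,A,·)`. -/
theorem markov_optimal_policy_switch_structure
    {M : ℕ} (hM : 1 ≤ M) (N : Fin M → ℕ)
    (𝒜 : Finset (Fin M → ℕ)) (κ : (Fin M → ℕ) → (Fin M → ℕ) → ℝ)
    (hκ0 : ∀ A ∈ 𝒜, ∀ A' ∈ 𝒜, 0 ≤ κ A A') (hκ1 : ∀ A ∈ 𝒜, ∑ A' ∈ 𝒜, κ A A' = 1)
    (wp wf : ℝ) (p f : Fin M → ℝ)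
    (V : QSpace M N → (Fin M → ℕ) → ℝ)
    (hV : ∀ A' ∈ 𝒜, ∀ Q₁ Q₂ : QSpace M N, Q₁.1 ≤ Q₂.1 → V Q₁ A' ≤ V Q₂ A') :
    ∀ A ∈ 𝒜, ∀ (Q : QSpace M N) (u : Fin M) (h : Q.1 u < N u),
      (∀ v : Fin M, JTilde 𝒜 κ wp wf p f V Q A u ≤ JTilde 𝒜 κ wp wf p f V Q A v) →
      ∀ v : Fin M, JTilde 𝒜 κ wp wf p f V (addE Q u h) A u ≤
        JTilde 𝒜 κ wp wf p f V (addE Q u h) A v :=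
  markov_optimal_policy_switch_structure_general N 𝒜 κ hκ0 wp wf p f V hV
end
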